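/- Let k be a constant and let (F_n) be a family of {*}-formulas over a field K whose sizes are bounded by a polynomial in n and whose maximal dimension is at most k, such that the tensor computed by each F_n has a single entry, the polynomial f_n. Then the family (f_n) is in VP. -/

import Mathlib

namespace TC

/-- An entry of an input tensor: an element of `K` or a variable. -/
inductive Entry (K : Type) where
  | const : K → Entry K
  | var : ℕ → Entry K

noncomputable def Entry.toPoly {K : Type} [CommSemiring K] : Entry K → MvPolynomial ℕ K
  | .const c => MvPolynomial.C c
  | .var n => MvPolynomial.X n

/-- The index set of a tensor of order `ns`. -/
def Idx : List ℕ → Type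
  | [] => PUnit
  | n :: ns => Fin n × Idx ns

def Idx.cast {xs ys : List ℕ} (h : xs = ys) (e : Idx xs) : Idx ys := h ▸ e

def Idx.app : (xs : List ℕ) → {ys : List ℕ} → Idx xs → Idx ys → Idx (xs ++ ys)
  | [], _, _, f => f
  | _ :: xs, _, e, f => (e.1, Idx.app xs e.2 f)

def Idx.split : (xs : List ℕ) → {ys : List ℕ} → Idx (xs ++ ys) → Idx xs × Idx ys
  | [], _, e => (PUnit.unit, e)
  | _ :: xs, _, e => ((e.1, (Idx.split xs e.2).1), (Idx.split xs e.2).2)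

/-- A tensor over `R`: an order `(n_1, …, n_k)` together with an entry map. -/
structure Tens (R : Type) where
  order : List ℕ
  entry : Idx order → R

/-- Number of entries of a tensor. -/
def Tens.tsize {R} (T : Tens R) : ℕ := T.order.prod

/-- Dimension of a tensor. -/
def Tens.dim {R} (T : Tens R) : ℕ := T.order.length

/-- Maximal order of a tensor. -/
def Tens.maxOrder {R} (T : Tens R) : ℕ := T.order.foldr max 0

/-- `T` and `G` can be contracted: last order of `T` equals first order of `G`. -/
def Tens.Compatible {R} (T G : Tens R) : Prop :=
  T.order ≠ [] ∧ G.order ≠ [] ∧ T.order.getLast? = G.order.head?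

/-- Contraction `T * G` on the last dimension of `T` and the first dimension of `G`
(returning a junk scalar tensor when the orders are incompatible). -/
def Tens.contr {R : Type} [CommSemiring R] (T G : Tens R) : Tens R :=
  match hT : T.order.getLast?, hG : G.order with
  | some c, c' :: ms =>
      if hc : c' = c then
        { order := T.order.dropLast ++ ms
          entry := fun e =>
            let p := Idx.split T.order.dropLast e
            ∑ i : Fin c,
              T.entry (Idx.cast
                (show T.order.dropLast ++ [c] = T.order by
                  have hne : T.order ≠ [] := by
                    intro h; rw [h] at hT; simp at hT
                  have : T.order.getLast hne = c := by
                    have := List.getLast?_eq_some_getLast hne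
                    rw [this] at hT
                    exact (Option.some.injEq _ _).mp hT
                  rw [← this]
                  exact List.dropLast_append_getLast hne)
                (Idx.app T.order.dropLast p.1 ((i, PUnit.unit) : Idx [c]))) *
              G.entry (Idx.cast
                (show c :: ms = G.order by rw [hG, hc])
                ((i, p.2) : Idx (c :: ms))) }
      else ⟨[], fun _ => 0⟩
  | _, _ => ⟨[], fun _ => 0⟩

end TC

namespace TC

/-- Insert a coordinate value at position `i`, recovering an index for order `l`
from an index for `l.eraseIdx i`. -/
def Idx.insertAt : (l : List ℕ) → (i : Fin l.length) → Fin (l.get i) →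
    Idx (l.eraseIdx i.val) → Idx l
  | _ :: _, ⟨0, _⟩, r, e => (r, e)
  | _ :: l, ⟨i + 1, h⟩, r, e =>
      (e.1, Idx.insertAt l ⟨i, by simpa using Nat.lt_of_succ_lt_succ h⟩ r e.2)

/-- The contraction `T *_{i,j} G` on dimension `i` of `T` and dimension `j` of `G`
(0-based; returns a junk scalar tensor when incompatible). -/
noncomputable def Tens.contrIJ {R : Type} [CommSemiring R] (T G : Tens R) (i j : ℕ) : Tens R :=
  if h : ∃ (hi : i < T.order.length) (hj : j < G.order.length),
      T.order.get ⟨i, hi⟩ = G.order.get ⟨j, hj⟩ then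
    { order := T.order.eraseIdx i ++ G.order.eraseIdx j
      entry := fun e =>
        let hi := h.choose
        let hj := h.choose_spec.choose
        let hc := h.choose_spec.choose_spec
        let p := Idx.split (T.order.eraseIdx i) e
        ∑ r : Fin (T.order.get ⟨i, hi⟩),
          T.entry (Idx.insertAt T.order ⟨i, hi⟩ r p.1) *
          G.entry (Idx.insertAt G.order ⟨j, hj⟩ (Fin.cast hc r) p.2) }
  else ⟨[], fun _ => 0⟩

/-- `{*}`-formulas: leaves are input tensors with entries in `K` or variables,
internal nodes are contractions `*`. -/
inductive SForm (K : Type) where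
  | input : Tens (Entry K) → SForm K
  | contr : SForm K → SForm K → SForm K

variable {K : Type} [Field K]

/-- The tensor computed by a `{*}`-formula. -/
noncomputable def SForm.eval : SForm K → Tens (MvPolynomial ℕ K)
  | .input T => ⟨T.order, fun e => (T.entry e).toPoly⟩
  | .contr F G => (F.eval).contr G.eval

/-- Well-formedness: at every `*`-node the orders match. -/
def SForm.WF : SForm K → Prop
  | .input _ => True
  | .contr F G => F.WF ∧ G.WF ∧ F.eval.Compatible G.eval

/-- Size of a `{*}`-formula: number of `*`-nodes plus sizes of the input tensors. -/
def SForm.size : SForm K → ℕ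
  | .input T => T.tsize
  | .contr F G => F.size + G.size + 1

/-- Dimension of the tensor computed by the formula. -/
noncomputable def SForm.dim (F : SForm K) : ℕ := F.eval.dim

/-- Maximal dimension over all nodes of the formula. -/
noncomputable def SForm.maxdim : SForm K → ℕ
  | .input T => T.dim
  | .contr F G => max ((F.eval.contr G.eval).dim) (max F.maxdim G.maxdim)

/-- Input dimension: maximal dimension of an input tensor. -/
def SForm.inputDim : SForm K → ℕ
  | .input T => T.dim
  | .contr F G => max F.inputDim G.inputDim

/-- Maximum of the maximal orders of the input tensors. -/
def SForm.inputMaxOrder : SForm K → ℕ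
  | .input T => T.maxOrder
  | .contr F G => max F.inputMaxOrder G.inputMaxOrder

/-- All input tensors have dimension at least 2. -/
def SForm.InputsDimGE2 : SForm K → Prop
  | .input T => 2 ≤ T.dim
  | .contr F G => F.InputsDimGE2 ∧ G.InputsDimGE2

/-- A formula of dimension `k` and input dimension `p` is tame if
`maxdim ≤ max k p`. -/
noncomputable def SForm.Tame (F : SForm K) : Prop := F.maxdim ≤ max F.dim F.inputDim

/-- Every subformula is tame. -/
noncomputable def SForm.TotallyTame : SForm K → Prop
  | .input T => (SForm.input T : SForm K).Tame
  | .contr F G => (SForm.contr F G).Tame ∧ F.TotallyTame ∧ G.TotallyTame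

/-- The tensor computed by `F` has a single entry, equal to the polynomial `f`. -/
noncomputable def SForm.ComputesPoly (F : SForm K) (f : MvPolynomial ℕ K) : Prop :=
  F.eval.tsize = 1 ∧ ∀ e, F.eval.entry e = f

/-- `{*_{i,j}}`-formulas: internal nodes carry the pair of contracted dimensions
(0-based). -/
inductive IForm (K : Type) where
  | input : Tens (Entry K) → IForm K
  | contr : ℕ → ℕ → IForm K → IForm K → IForm K

noncomputable def IForm.eval : IForm K → Tens (MvPolynomial ℕ K)
  | .input T => ⟨T.order, fun e => (T.entry e).toPoly⟩
  | .contr i j F G => (F.eval).contrIJ G.eval i j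

def IForm.WF : IForm K → Prop
  | .input _ => True
  | .contr i j F G => F.WF ∧ G.WF ∧
      ∃ (hi : i < F.eval.order.length) (hj : j < G.eval.order.length),
        F.eval.order.get ⟨i, hi⟩ = G.eval.order.get ⟨j, hj⟩

def IForm.size : IForm K → ℕ
  | .input T => T.tsize
  | .contr _ _ F G => F.size + G.size + 1

noncomputable def IForm.dim (F : IForm K) : ℕ := F.eval.dim

noncomputable def IForm.maxdim : IForm K → ℕ
  | .input T => T.dim
  | .contr i j F G => max ((F.eval.contrIJ G.eval i j).dim) (max F.maxdim G.maxdim)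

def IForm.inputDim : IForm K → ℕ
  | .input T => T.dim
  | .contr _ _ F G => max F.inputDim G.inputDim

noncomputable def IForm.Tame (F : IForm K) : Prop := F.maxdim ≤ max F.dim F.inputDim

noncomputable def IForm.TotallyTame : IForm K → Prop
  | .input T => (IForm.input T : IForm K).Tame
  | .contr i j F G => (IForm.contr i j F G).Tame ∧ F.TotallyTame ∧ G.TotallyTame

noncomputable def IForm.ComputesPoly (F : IForm K) (f : MvPolynomial ℕ K) : Prop :=
  F.eval.tsize = 1 ∧ ∀ e, F.eval.entry e = f

end TC

namespace TC

/-- A gate of an arithmetic circuit: an input (constant or variable) or a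
computation gate with the indices of its two children. -/
inductive Gate (K : Type) where
  | const : K → Gate K
  | var : ℕ → Gate K
  | add : ℕ → ℕ → Gate K
  | mul : ℕ → ℕ → Gate K

def Gate.children {K} : Gate K → List ℕ
  | .add j k => [j, k]
  | .mul j k => [j, k]
  | _ => []

def Gate.IsInput {K} : Gate K → Prop
  | .const _ => True
  | .var _ => True
  | _ => False

/-- An arithmetic circuit: a DAG of gates (children point to smaller indices,
which is equivalent to acyclicity) with a distinguished output gate. -/
structure Circuit (K : Type) where
  size : ℕ
  gate : Fin size → Gate K
  output : Fin size
  wf : ∀ i : Fin size, ∀ j ∈ (gate i).children, j < i.val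

/-- The polynomial computed by a gate of the circuit. -/
noncomputable def Circuit.eval {K : Type} [Field K] (C : Circuit K) :
    Fin C.size → MvPolynomial ℕ K
  | i =>
    match h : C.gate i with
    | .const c => MvPolynomial.C c
    | .var n => MvPolynomial.X n
    | .add j k =>
        have hj : j < i.val := C.wf i j (by rw [h]; simp [Gate.children])
        have hk : k < i.val := C.wf i k (by rw [h]; simp [Gate.children])
        C.eval ⟨j, hj.trans i.isLt⟩ + C.eval ⟨k, hk.trans i.isLt⟩
    | .mul j k =>
        have hj : j < i.val := C.wf i j (by rw [h]; simp [Gate.children])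
        have hk : k < i.val := C.wf i k (by rw [h]; simp [Gate.children])
        C.eval ⟨j, hj.trans i.isLt⟩ * C.eval ⟨k, hk.trans i.isLt⟩
  termination_by i => i.val

/-- The circuit computes `f` if its output gate computes `f`. -/
noncomputable def Circuit.Computes {K : Type} [Field K] (C : Circuit K)
    (f : MvPolynomial ℕ K) : Prop :=
  C.eval C.output = f

/-- `a` is a child of `b`. -/
def Circuit.Child {K} (C : Circuit K) (a b : Fin C.size) : Prop :=
  a.val ∈ (C.gate b).children

/-- The set of gates of the subcircuit rooted at `i`. -/
def Circuit.Subgates {K} (C : Circuit K) (i : Fin C.size) : Set (Fin C.size) :=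
  {j | Relation.ReflTransGen C.Child j i}

/-- Multiplicatively disjoint: the subcircuits rooted at the two children of any
`×`-gate are disjoint. -/
def Circuit.MultDisjoint {K} (C : Circuit K) : Prop :=
  ∀ i : Fin C.size, ∀ j k : ℕ, C.gate i = .mul j k →
    ∀ (hj : j < C.size) (hk : k < C.size),
      Disjoint (C.Subgates ⟨j, hj⟩) (C.Subgates ⟨k, hk⟩)

/-- Skew: every `×`-gate has at least one child which is an input gate. -/
def Circuit.Skew {K} (C : Circuit K) : Prop :=
  ∀ i : Fin C.size, ∀ j k : ℕ, C.gate i = .mul j k →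
    ∀ (hj : j < C.size) (hk : k < C.size),
      (C.gate ⟨j, hj⟩).IsInput ∨ (C.gate ⟨k, hk⟩).IsInput

/-- The class VP: families of polynomials computed by polynomial-size
multiplicatively disjoint circuits. -/
noncomputable def VP {K : Type} [Field K] (f : ℕ → MvPolynomial ℕ K) : Prop :=
  ∃ (C : ℕ → Circuit K) (P : Polynomial ℕ),
    ∀ n, (C n).MultDisjoint ∧ (C n).Computes (f n) ∧ (C n).size ≤ P.eval n

/-- Parse trees, recording at each node the index of the corresponding gate. -/
inductive ParseT where
  | leaf : ℕ → ParseT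
  | plus : ℕ → ParseT → ParseT
  | times : ℕ → ParseT → ParseT → ParseT

/-- Ordered rooted trees (shapes of parse trees); two parse trees are isomorphic
as ordered rooted trees iff they have the same shape. -/
inductive Shape where
  | lf : Shape
  | un : Shape → Shape
  | bin : Shape → Shape → Shape

def ParseT.shape : ParseT → Shape
  | .leaf _ => .lf
  | .plus _ t => .un t.shape
  | .times _ l r => .bin l.shape r.shape

/-- Number of vertices of a tree. -/
def Shape.size : Shape → ℕ
  | .lf => 1
  | .un t => t.size + 1
  | .bin l r => l.size + r.size + 1

/-- `C.ParseFrom i t`: `t` is a parse tree of the subcircuit of `C` rooted at gate `i`. -/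
inductive Circuit.ParseFrom {K} (C : Circuit K) : Fin C.size → ParseT → Prop where
  | leaf (i : Fin C.size) (h : (C.gate i).IsInput) : C.ParseFrom i (.leaf i.val)
  | plusL (i : Fin C.size) (j k : ℕ) (h : C.gate i = .add j k) (hj : j < C.size)
      (t : ParseT) (ht : C.ParseFrom ⟨j, hj⟩ t) : C.ParseFrom i (.plus i.val t)
  | plusR (i : Fin C.size) (j k : ℕ) (h : C.gate i = .add j k) (hk : k < C.size)
      (t : ParseT) (ht : C.ParseFrom ⟨k, hk⟩ t) : C.ParseFrom i (.plus i.val t)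
  | times (i : Fin C.size) (j k : ℕ) (h : C.gate i = .mul j k)
      (hj : j < C.size) (hk : k < C.size) (tl tr : ParseT)
      (hl : C.ParseFrom ⟨j, hj⟩ tl) (hr : C.ParseFrom ⟨k, hk⟩ tr) :
      C.ParseFrom i (.times i.val tl tr)

/-- `t` is a parse tree of the circuit `C`. -/
def Circuit.IsParseTree {K} (C : Circuit K) (t : ParseT) : Prop :=
  C.ParseFrom C.output t

end TC

/-! Every node of a `{*}`-formula is compiled into a multiplicatively disjoint circuit having a gate
for each entry of the tensor computed at that node. At a node `T * G` the circuits for `T` and `G`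
are placed side by side, and for every entry of the result a chain of `2c + 1` gates adds up the
`c` products `T[e, i] * G[i, e']`; each product takes one factor from each of the two disjoint
parts, so multiplicative disjointness is preserved. If every input has an entry, every order is at
most the size `s` of the formula, so a node of dimension at most `k` has at most `(s + 1) ^ k`
entries and the circuit has at most `s * (s + 1) ^ k * (2 * s + 3) + 1` gates. If some input has no
entry, the formula computes `0`. -/

theorem List.foldr_max_le_prod {l : List ℕ} (h : 0 < l.prod) : l.foldr max 0 ≤ l.prod :=
  List.max_le_of_forall_le l _ fun _ hx => Nat.le_of_dvd h (List.dvd_prod hx)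

namespace TC

section Tensors

instance Idx.instFintype : (l : List ℕ) → Fintype (Idx l)
  | [] => inferInstanceAs (Fintype PUnit)
  | n :: ns => letI := Idx.instFintype ns; inferInstanceAs (Fintype (Fin n × Idx ns))

theorem Idx.card_eq_prod : ∀ l : List ℕ, Fintype.card (Idx l) = l.prod
  | [] => rfl
  | n :: ns => by
    show Fintype.card (Fin n × Idx ns) = _
    rw [Fintype.card_prod, Fintype.card_fin, Idx.card_eq_prod ns, List.prod_cons]

noncomputable def Idx.equivFin (l : List ℕ) : Idx l ≃ Fin l.prod :=
  Fintype.equivFinOfCardEq (Idx.card_eq_prod l)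

theorem Idx.equivFin_symm_mk_val {l : List ℕ} (e : Idx l)
    (h : (Idx.equivFin l e).val < l.prod) : (Idx.equivFin l).symm ⟨Idx.equivFin l e, h⟩ = e :=
  (Equiv.symm_apply_eq _).mpr (Fin.ext rfl)

variable {R : Type}

theorem Tens.tsize_pos_iff (T : Tens R) : 0 < T.tsize ↔ Nonempty (Idx T.order) := by
  rw [← Fintype.card_pos_iff, Idx.card_eq_prod]
  rfl

theorem Tens.tsize_le_pow {T : Tens R} {M k : ℕ} (hM : ∀ x ∈ T.order, x ≤ M)
    (hk : T.dim ≤ k) : T.tsize ≤ (M + 1) ^ k :=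
  (List.prod_le_pow_card _ _ fun x hx => (hM x hx).trans M.le_succ).trans
    (Nat.pow_le_pow_right M.succ_pos hk)

variable [CommSemiring R]

theorem Tens.contr_eq_of_compatible {T G : Tens R} (h : T.Compatible G) :
    ∃ (c : ℕ) (ms : List ℕ) (hG : G.order = c :: ms) (hT : T.order.dropLast ++ [c] = T.order),
      T.contr G = ⟨T.order.dropLast ++ ms, fun e =>
        ∑ i : Fin c,
          T.entry (Idx.cast hT (Idx.app T.order.dropLast (Idx.split T.order.dropLast e).1
            ((i, PUnit.unit) : Idx [c]))) *
          G.entry (Idx.cast hG.symm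
            ((i, (Idx.split T.order.dropLast e).2) : Idx (c :: ms)))⟩ := by
  obtain ⟨hTne, hGne, hlast⟩ := h
  obtain ⟨c, ms, hG⟩ := List.exists_cons_of_ne_nil hGne
  rw [hG, List.head?_cons] at hlast
  have hT : T.order.dropLast ++ [c] = T.order := by
    rw [← Option.some.inj ((List.getLast?_eq_some_getLast hTne).symm.trans hlast)]
    exact List.dropLast_append_getLast hTne
  refine ⟨c, ms, hG, hT, ?_⟩
  unfold Tens.contr
  split
  · rename_i c₁ c₂ ms₂ hT₁ hG₂
    obtain rfl : c₁ = c := Option.some.inj (hT₁.symm.trans hlast)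
    obtain ⟨rfl, rfl⟩ := List.cons.inj (hG₂.symm.trans hG)
    rw [dif_pos rfl]
  · rename_i hbad
    exact absurd (hbad c c ms hlast hG) id

theorem Tens.contr_order {T G : Tens R} (h : T.Compatible G) :
    (T.contr G).order = T.order.dropLast ++ G.order.tail := by
  obtain ⟨c, ms, hG, _, hspec⟩ := Tens.contr_eq_of_compatible h
  rw [hspec]
  simp [hG]

theorem Tens.exists_contr_entry_eq_sum {T G : Tens R} (h : T.Compatible G) :
    ∃ (c : ℕ) (l : Idx (T.contr G).order → Fin c → Idx T.order)
      (r : Idx (T.contr G).order → Fin c → Idx G.order),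
      c ∈ G.order ∧ ∀ e, (T.contr G).entry e = ∑ i, T.entry (l e i) * G.entry (r e i) := by
  obtain ⟨c, ms, hG, hT, hspec⟩ := Tens.contr_eq_of_compatible h
  have horder : (T.contr G).order = T.order.dropLast ++ ms := by rw [hspec]
  refine ⟨c, fun e i => Idx.cast hT (Idx.app T.order.dropLast
      (Idx.split T.order.dropLast (Idx.cast horder e)).1 ((i, PUnit.unit) : Idx [c])),
    fun e i => Idx.cast hG.symm ((i, (Idx.split T.order.dropLast (Idx.cast horder e)).2) :
      Idx (c :: ms)), hG ▸ List.mem_cons_self, fun e => ?_⟩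
  generalize T.contr G = U at horder hspec e ⊢
  subst hspec
  rfl

end Tensors

section CircuitStructure

variable {K : Type}

def Gate.shift (s : ℕ) : Gate K → Gate K
  | .add j k => .add (s + j) (s + k)
  | .mul j k => .mul (s + j) (s + k)
  | g => g

theorem Gate.shift_zero (g : Gate K) : g.shift 0 = g := by
  cases g <;> simp [Gate.shift]

theorem Gate.mem_children_shift {g : Gate K} {s j : ℕ} (h : j ∈ (g.shift s).children) :
    ∃ j₀ ∈ g.children, j = s + j₀ := by
  cases g <;> simp [Gate.shift, Gate.children] at h ⊢ <;> tauto

theorem Gate.eq_mul_of_shift_eq_mul {g : Gate K} {s j k : ℕ} (h : g.shift s = .mul j k) :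
    ∃ j₀ k₀, g = .mul j₀ k₀ ∧ j = s + j₀ ∧ k = s + k₀ := by
  cases g <;> simp_all [Gate.shift]

theorem Circuit.le_of_mem_subgates {C : Circuit K} {a b : Fin C.size} (h : a ∈ C.Subgates b) :
    a ≤ b := by
  induction h with
  | refl => exact le_rfl
  | tail _ hchild ih => exact ih.trans (C.wf _ _ hchild).le

structure Circuit.CopyAt (C C' : Circuit K) (s : ℕ) : Prop where
  size_le : s + C.size ≤ C'.size
  gate_eq : ∀ t, C'.gate (Fin.castLE size_le (Fin.natAdd s t)) = (C.gate t).shift s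

namespace Circuit.CopyAt

variable {C C' : Circuit K} {s : ℕ}

def emb (h : C.CopyAt C' s) (t : Fin C.size) : Fin C'.size :=
  Fin.castLE h.size_le (Fin.natAdd s t)

@[simp] theorem val_emb (h : C.CopyAt C' s) (t : Fin C.size) : (h.emb t).val = s + t := rfl

theorem emb_injective (h : C.CopyAt C' s) : Function.Injective h.emb := fun a b hab =>
  Fin.ext (by simpa using congrArg Fin.val hab)

theorem mem_subgates (h : C.CopyAt C' s) {t : Fin C.size} {a : Fin C'.size}
    (ha : a ∈ C'.Subgates (h.emb t)) : ∃ a' ∈ C.Subgates t, a = h.emb a' := by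
  induction ha using Relation.ReflTransGen.head_induction_on with
  | refl => exact ⟨t, Relation.ReflTransGen.refl, rfl⟩
  | head hchild _ ih =>
    obtain ⟨c', hc', rfl⟩ := ih
    rename_i x _
    have hx : x.val ∈ ((C.gate c').shift s).children := by rw [← h.gate_eq c']; exact hchild
    obtain ⟨j, hj, hxj⟩ := Gate.mem_children_shift hx
    have hjc : j < c' := C.wf c' j hj
    exact ⟨⟨j, by omega⟩, Relation.ReflTransGen.head hj hc', Fin.ext (by simpa using hxj)⟩

theorem le_of_mem_subgates (h : C.CopyAt C' s) {t : Fin C.size} {a : Fin C'.size}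
    (ha : a ∈ C'.Subgates (h.emb t)) : s ≤ a := by
  obtain ⟨a', -, rfl⟩ := h.mem_subgates ha
  simp

theorem disjoint_subgates (h : C.CopyAt C' s) (hC : C.MultDisjoint) {t : Fin C.size} {j k : ℕ}
    (hmul : C'.gate (h.emb t) = .mul j k) (hj : j < C'.size) (hk : k < C'.size) :
    Disjoint (C'.Subgates ⟨j, hj⟩) (C'.Subgates ⟨k, hk⟩) := by
  obtain ⟨j₀, k₀, ht, rfl, rfl⟩ :=
    Gate.eq_mul_of_shift_eq_mul ((h.gate_eq t).symm.trans hmul)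
  have hj₀ : j₀ < t := C.wf t j₀ (by simp [ht, Gate.children])
  have hk₀ : k₀ < t := C.wf t k₀ (by simp [ht, Gate.children])
  have hjemb : (⟨s + j₀, hj⟩ : Fin C'.size) = h.emb ⟨j₀, by omega⟩ := rfl
  have hkemb : (⟨s + k₀, hk⟩ : Fin C'.size) = h.emb ⟨k₀, by omega⟩ := rfl
  rw [hjemb, hkemb, Set.disjoint_left]
  rintro a haj hak
  obtain ⟨a₁, ha₁, rfl⟩ := h.mem_subgates haj
  obtain ⟨a₂, ha₂, heq⟩ := h.mem_subgates hak
  rw [h.emb_injective heq] at ha₁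
  exact Set.disjoint_left.mp (hC t j₀ k₀ ht _ _) ha₁ ha₂

end Circuit.CopyAt

def Circuit.withOutput (C : Circuit K) (g : Fin C.size) : Circuit K := { C with output := g }

theorem Circuit.copyAt_withOutput (C : Circuit K) (g : Fin C.size) :
    C.CopyAt (C.withOutput g) 0 :=
  ⟨(zero_add _).le, fun t => by
    rw [Gate.shift_zero]; exact congrArg C.gate (Fin.ext (zero_add _))⟩

def Circuit.const (c : K) : Circuit K where
  size := 1
  gate _ := .const c
  output := 0
  wf _ _ hj := by simp [Gate.children] at hj

theorem Circuit.const_multDisjoint (c : K) : (Circuit.const c).MultDisjoint := by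
  intro i j k hmul
  cases hmul

def Entry.toGate : Entry K → Gate K
  | .const c => .const c
  | .var n => .var n

theorem Entry.children_toGate (x : Entry K) : x.toGate.children = [] := by
  cases x <;> rfl

theorem Entry.toGate_ne_mul (x : Entry K) (j k : ℕ) : x.toGate ≠ .mul j k := by
  cases x <;> simp [Entry.toGate]

end CircuitStructure

section Evaluation

variable {K : Type} [Field K]

noncomputable def Gate.evalWith (v : ℕ → MvPolynomial ℕ K) : Gate K → MvPolynomial ℕ K
  | .const c => MvPolynomial.C c
  | .var n => MvPolynomial.X n
  | .add j k => v j + v k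
  | .mul j k => v j * v k

theorem Gate.evalWith_shift (v : ℕ → MvPolynomial ℕ K) (s : ℕ) (g : Gate K) :
    (g.shift s).evalWith v = g.evalWith (fun j => v (s + j)) := by
  cases g <;> rfl

theorem Gate.evalWith_congr {v w : ℕ → MvPolynomial ℕ K} {g : Gate K}
    (h : ∀ j ∈ g.children, v j = w j) : g.evalWith v = g.evalWith w := by
  cases g <;> simp_all [Gate.evalWith, Gate.children]

theorem Entry.evalWith_toGate (v : ℕ → MvPolynomial ℕ K) (x : Entry K) :
    x.toGate.evalWith v = x.toPoly := by
  cases x <;> rfl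

noncomputable def Circuit.val (C : Circuit K) (j : ℕ) : MvPolynomial ℕ K :=
  if h : j < C.size then C.eval ⟨j, h⟩ else 0

theorem Circuit.eval_eq_evalWith (C : Circuit K) (i : Fin C.size) :
    C.eval i = (C.gate i).evalWith C.val := by
  have hlt : ∀ j ∈ (C.gate i).children, j < C.size := fun j hj => (C.wf i j hj).trans i.isLt
  rw [Circuit.eval]
  split <;> rename_i hg <;> rw [hg] at hlt <;>
    simp_all [Gate.evalWith, Gate.children, Circuit.val]

theorem Circuit.CopyAt.eval_emb {C C' : Circuit K} {s : ℕ} (h : C.CopyAt C' s)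
    (t : Fin C.size) : C'.eval (h.emb t) = C.eval t := by
  obtain ⟨t, ht⟩ := t
  induction t using Nat.strong_induction_on with
  | _ t ih =>
    rw [Circuit.eval_eq_evalWith, Circuit.eval_eq_evalWith, Circuit.CopyAt.emb, h.gate_eq,
      Gate.evalWith_shift]
    refine Gate.evalWith_congr fun j hj => ?_
    have hjt : j < t := C.wf _ j hj
    have := h.size_le
    simp only [Circuit.val, dif_pos (by omega : j < C.size), dif_pos (by omega : s + j < C'.size)]
    exact ih j hjt (by omega)

theorem Circuit.withOutput_computes {C : Circuit K} {g : Fin C.size} {f : MvPolynomial ℕ K}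
    (hg : C.eval g = f) : (C.withOutput g).Computes f := by
  rw [← hg, ← (C.copyAt_withOutput g).eval_emb g]
  exact congrArg _ (Fin.ext (zero_add _).symm)

theorem Circuit.const_computes (c : K) : (Circuit.const c).Computes (MvPolynomial.C c) := by
  rw [Circuit.Computes, Circuit.eval_eq_evalWith]
  rfl

end Evaluation

section SumProdLayer

variable {K : Type} [Field K] (CL CR : Circuit K) (N c : ℕ)
  (src : ℕ → ℕ → Fin CL.size × Fin CR.size)

/-- Gate `i` of `sumProdLayer`: copies of `CL` and `CR`, followed by one block of `2c + 1` gates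
for each `b`, in which gate `0` is `0`, gate `2u + 1` multiplies gate `(src b u).1` of `CL` with
gate `(src b u).2` of `CR`, and gate `2u + 2` adds gates `2u` and `2u + 1`. -/
def Circuit.sumProdGate (i : ℕ) : Gate K :=
  if h : i < CL.size then CL.gate ⟨i, h⟩
  else if h' : i < CL.size + CR.size then (CR.gate ⟨i - CL.size, by omega⟩).shift CL.size
  else
    let b := (i - (CL.size + CR.size)) / (2 * c + 1)
    let o := (i - (CL.size + CR.size)) % (2 * c + 1)
    if o = 0 then .const 0
    else if o % 2 = 1 then .mul (src b (o / 2)).1 (CL.size + (src b (o / 2)).2)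
    else .add (i - 2) (i - 1)

def Circuit.sumProdLayer : Circuit K where
  size := CL.size + CR.size + N * (2 * c + 1)
  gate i := Circuit.sumProdGate CL CR c src i
  output := ⟨0, by have := CL.output.pos; omega⟩
  wf i j hj := by
    have := CR.output.pos
    dsimp only [Circuit.sumProdGate] at hj
    split_ifs at hj
    · exact CL.wf _ _ hj
    · obtain ⟨j₀, hj₀, rfl⟩ := Gate.mem_children_shift hj
      have : j₀ < i - CL.size := CR.wf _ _ hj₀
      omega
    · simp [Gate.children] at hj
    all_goals
      simp only [Gate.children, List.mem_cons, List.not_mem_nil, or_false] at hj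
      rcases hj with rfl | rfl <;> omega

namespace Circuit.sumProdLayer

theorem copyAt_left : CL.CopyAt (sumProdLayer CL CR N c src) 0 where
  size_le := by simp only [sumProdLayer]; omega
  gate_eq t := by
    show sumProdGate CL CR c src (0 + t) = _
    rw [sumProdGate, dif_pos (by omega)]
    simp only [zero_add, Gate.shift_zero]

theorem copyAt_right : CR.CopyAt (sumProdLayer CL CR N c src) CL.size where
  size_le := by simp only [sumProdLayer]; omega
  gate_eq t := by
    show sumProdGate CL CR c src (CL.size + t) = _
    rw [sumProdGate, dif_neg (by omega), dif_pos (by omega)]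
    simp only [Nat.add_sub_cancel_left]

theorem val_left (a : Fin CL.size) : (sumProdLayer CL CR N c src).val a = CL.eval a := by
  rw [← (copyAt_left CL CR N c src).eval_emb a, Circuit.val,
    dif_pos (by simp only [sumProdLayer]; omega)]
  congr 1
  ext
  simp

theorem val_right (r : Fin CR.size) :
    (sumProdLayer CL CR N c src).val (CL.size + r) = CR.eval r := by
  rw [← (copyAt_right CL CR N c src).eval_emb r, Circuit.val,
    dif_pos (by simp only [sumProdLayer]; omega)]
  rfl

theorem gate_block {b o : ℕ} (ho : o < 2 * c + 1) (i : Fin (sumProdLayer CL CR N c src).size)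
    (hi : i.val = CL.size + CR.size + (b * (2 * c + 1) + o)) :
    (sumProdLayer CL CR N c src).gate i =
      if o = 0 then .const 0
      else if o % 2 = 1 then .mul (src b (o / 2)).1 (CL.size + (src b (o / 2)).2)
      else .add (i - 2) (i - 1) := by
  have hdiv : (b * (2 * c + 1) + o) / (2 * c + 1) = b := by
    rw [Nat.add_comm, Nat.add_mul_div_right _ _ (by omega), Nat.div_eq_of_lt ho, zero_add]
  have hmod : (b * (2 * c + 1) + o) % (2 * c + 1) = o := by
    rw [Nat.add_comm, Nat.add_mul_mod_self_right, Nat.mod_eq_of_lt ho]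
  show sumProdGate CL CR c src i = _
  rw [sumProdGate, dif_neg (by omega), dif_neg (by omega)]
  simp only [hi, Nat.add_sub_cancel_left, hdiv, hmod]

theorem eval_block {b u : ℕ} (hu : u ≤ c) (i : Fin (sumProdLayer CL CR N c src).size)
    (hi : i.val = CL.size + CR.size + (b * (2 * c + 1) + 2 * u)) :
    (sumProdLayer CL CR N c src).eval i =
      ∑ v ∈ Finset.range u, CL.eval (src b v).1 * CR.eval (src b v).2 := by
  induction u generalizing i with
  | zero =>
    rw [Circuit.eval_eq_evalWith, gate_block CL CR N c src (by omega) i hi, if_pos rfl]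
    simp [Gate.evalWith]
  | succ u ih =>
    rw [Circuit.eval_eq_evalWith, gate_block CL CR N c src (by omega) i hi,
      if_neg (by omega), if_neg (by omega), Gate.evalWith, Finset.sum_range_succ]
    have hsum : (sumProdLayer CL CR N c src).val (i - 2) =
        ∑ v ∈ Finset.range u, CL.eval (src b v).1 * CR.eval (src b v).2 := by
      rw [Circuit.val, dif_pos (by omega)]
      exact ih (by omega) _ (by simp only; omega)
    have hprod : (sumProdLayer CL CR N c src).val (i - 1) =
        CL.eval (src b u).1 * CR.eval (src b u).2 := by
      rw [Circuit.val, dif_pos (by omega), Circuit.eval_eq_evalWith,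
        gate_block CL CR N c src (b := b) (o := 2 * u + 1) (by omega) _ (by simp only; omega),
        if_neg (by omega), if_pos (by omega), (by omega : (2 * u + 1) / 2 = u), Gate.evalWith,
        val_left, val_right]
    rw [hsum, hprod]

theorem exists_eval_eq_sum {b : ℕ} (hb : b < N) :
    ∃ g, (sumProdLayer CL CR N c src).eval g =
      ∑ u ∈ Finset.range c, CL.eval (src b u).1 * CR.eval (src b u).2 := by
  have hlt : CL.size + CR.size + (b * (2 * c + 1) + 2 * c) <
      CL.size + CR.size + N * (2 * c + 1) := by
    nlinarith
  exact ⟨⟨_, hlt⟩, eval_block CL CR N c src le_rfl _ rfl⟩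

theorem multDisjoint (hL : CL.MultDisjoint) (hR : CR.MultDisjoint) :
    (sumProdLayer CL CR N c src).MultDisjoint := by
  intro i j k hmul hj hk
  by_cases h₁ : i.val < CL.size
  · have hi : i = (copyAt_left CL CR N c src).emb ⟨i, h₁⟩ := Fin.ext (by simp)
    rw [hi] at hmul
    exact (copyAt_left CL CR N c src).disjoint_subgates hL hmul hj hk
  by_cases h₂ : i.val < CL.size + CR.size
  · have hi : i = (copyAt_right CL CR N c src).emb ⟨i - CL.size, by omega⟩ :=
      Fin.ext (by simp; omega)
    rw [hi] at hmul
    exact (copyAt_right CL CR N c src).disjoint_subgates hR hmul hj hk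
  obtain ⟨a, r, rfl, rfl⟩ :
      ∃ (a : Fin CL.size) (r : Fin CR.size), j = a ∧ k = CL.size + r := by
    change sumProdGate CL CR c src i = _ at hmul
    rw [sumProdGate, dif_neg h₁, dif_neg h₂] at hmul
    dsimp only at hmul
    split_ifs at hmul
    obtain ⟨rfl, rfl⟩ := Gate.mul.inj hmul
    exact ⟨_, _, rfl, rfl⟩
  rw [Set.disjoint_left]
  intro x hxa hxr
  have hxL : x.val ≤ a := Circuit.le_of_mem_subgates hxa
  have hxR : CL.size ≤ x.val := (copyAt_right CL CR N c src).le_of_mem_subgates (t := r) hxr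
  omega

end Circuit.sumProdLayer

end SumProdLayer

section Compilation

variable {K : Type} [Field K]

def Circuit.ComputesEntries (C : Circuit K) (T : Tens (MvPolynomial ℕ K)) : Prop :=
  ∀ e, ∃ g, C.eval g = T.entry e

noncomputable def Circuit.inputGate (T : Tens (Entry K)) (i : ℕ) : Gate K :=
  if h : i < T.order.prod then (T.entry ((Idx.equivFin T.order).symm ⟨i, h⟩)).toGate
  else .const 0

theorem Circuit.inputGate_equivFin (T : Tens (Entry K)) (e : Idx T.order) :
    Circuit.inputGate T (Idx.equivFin T.order e) = (T.entry e).toGate := by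
  rw [Circuit.inputGate, dif_pos (Idx.equivFin T.order e).isLt, Idx.equivFin_symm_mk_val]

/-- The spare last gate gives the circuit an output gate even when `T` has no entries. -/
noncomputable def Circuit.ofInputs (T : Tens (Entry K)) : Circuit K where
  size := T.tsize + 1
  gate i := Circuit.inputGate T i
  output := ⟨T.tsize, by omega⟩
  wf i j hj := by
    unfold Circuit.inputGate at hj
    split at hj
    · simp [Entry.children_toGate] at hj
    · simp [Gate.children] at hj

theorem Circuit.ofInputs_multDisjoint (T : Tens (Entry K)) :
    (Circuit.ofInputs T).MultDisjoint := by
  intro i j k hmul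
  change Circuit.inputGate T i = _ at hmul
  unfold Circuit.inputGate at hmul
  split at hmul
  · exact absurd hmul (Entry.toGate_ne_mul _ j k)
  · cases hmul

theorem Circuit.ofInputs_computesEntries (T : Tens (Entry K)) :
    (Circuit.ofInputs T).ComputesEntries ⟨T.order, fun e => (T.entry e).toPoly⟩ := by
  intro e
  have he := (Idx.equivFin T.order e).isLt
  refine ⟨⟨Idx.equivFin T.order e, by simp only [Circuit.ofInputs, Tens.tsize]; omega⟩, ?_⟩
  rw [Circuit.eval_eq_evalWith]
  exact (congrArg _ (Circuit.inputGate_equivFin T e)).trans (Entry.evalWith_toGate _ _)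

theorem Circuit.exists_computesEntries_contr {T G : Tens (MvPolynomial ℕ K)}
    (hc : T.Compatible G) {CL CR : Circuit K} (hL : CL.ComputesEntries T)
    (hR : CR.ComputesEntries G) (mdL : CL.MultDisjoint) (mdR : CR.MultDisjoint) {M : ℕ}
    (hM : ∀ x ∈ G.order, x ≤ M) :
    ∃ C : Circuit K, C.MultDisjoint ∧ C.ComputesEntries (T.contr G) ∧
      C.size ≤ CL.size + CR.size + (T.contr G).tsize * (2 * M + 1) := by
  obtain ⟨c, l, r, hcG, hentry⟩ := Tens.exists_contr_entry_eq_sum hc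
  choose outL houtL using hL
  choose outR houtR using hR
  let src (b u : ℕ) : Fin CL.size × Fin CR.size :=
    if h : b < (T.contr G).order.prod ∧ u < c then
      let e := (Idx.equivFin _).symm ⟨b, h.1⟩
      (outL (l e ⟨u, h.2⟩), outR (r e ⟨u, h.2⟩))
    else (CL.output, CR.output)
  refine ⟨Circuit.sumProdLayer CL CR (T.contr G).tsize c src,
    Circuit.sumProdLayer.multDisjoint _ _ _ _ _ mdL mdR, fun e => ?_, ?_⟩
  · have hb := (Idx.equivFin _ e).isLt
    obtain ⟨g, hg⟩ := Circuit.sumProdLayer.exists_eval_eq_sum CL CR _ c src hb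
    refine ⟨g, hg.trans ?_⟩
    rw [Finset.sum_range, hentry]
    refine Finset.sum_congr rfl fun u _ => ?_
    simp only [src, dif_pos (And.intro hb u.isLt), houtL, houtR, Idx.equivFin_symm_mk_val]
  · have := hM c hcG
    change _ + _ + _ * (2 * c + 1) ≤ _
    gcongr

end Compilation

section Formulas

/-- Without this, an input of order `(0, n)` has size `0` for every `n`, and the orders of the
tensors computed by a formula are not bounded by its size. -/
def SForm.InputsNonempty {K : Type} : SForm K → Prop
  | .input T => 0 < T.tsize
  | .contr F G => F.InputsNonempty ∧ G.InputsNonempty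

theorem SForm.inputMaxOrder_le_size {K : Type} {F : SForm K} (hF : F.InputsNonempty) :
    F.inputMaxOrder ≤ F.size := by
  induction F with
  | input T => exact List.foldr_max_le_prod hF
  | contr F G ihF ihG =>
    exact max_le ((ihF hF.1).trans (by simp only [SForm.size]; omega))
      ((ihG hF.2).trans (by simp only [SForm.size]; omega))

variable {K : Type} [Field K]

theorem SForm.le_inputMaxOrder {F : SForm K} (hF : F.WF) :
    ∀ x ∈ F.eval.order, x ≤ F.inputMaxOrder := by
  induction F with
  | input T => exact fun x hx => List.le_max_of_le hx le_rfl
  | contr F G ihF ihG =>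
    obtain ⟨hF, hG, hc⟩ := hF
    intro x hx
    change x ∈ (F.eval.contr G.eval).order at hx
    rw [Tens.contr_order hc, List.mem_append] at hx
    rcases hx with hx | hx
    · exact (ihF hF x (List.dropLast_subset _ hx)).trans (le_max_left _ _)
    · exact (ihG hG x (List.tail_subset _ hx)).trans (le_max_right _ _)

theorem SForm.inputsNonempty_or_eval_eq_zero {F : SForm K} (hF : F.WF) :
    F.InputsNonempty ∨ ∀ e, F.eval.entry e = 0 := by
  induction F with
  | input T =>
    refine (Nat.eq_zero_or_pos T.tsize).symm.imp id fun h e => ?_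
    exact absurd ((Tens.tsize_pos_iff T).mpr ⟨e⟩) (by omega)
  | contr F G ihF ihG =>
    obtain ⟨hF, hG, hc⟩ := hF
    obtain ⟨c, l, r, -, hentry⟩ := Tens.exists_contr_entry_eq_sum hc
    change F.InputsNonempty ∧ G.InputsNonempty ∨ ∀ e, (F.eval.contr G.eval).entry e = 0
    rcases ihF hF with hF' | hF'
    · rcases ihG hG with hG' | hG'
      · exact Or.inl ⟨hF', hG'⟩
      · exact Or.inr fun e => by simp [hentry, hG']
    · exact Or.inr fun e => by simp [hentry, hF']

theorem SForm.exists_circuit_computesEntries {k M : ℕ} {F : SForm K} (hWF : F.WF)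
    (hdim : F.maxdim ≤ k) (hM : F.inputMaxOrder ≤ M) :
    ∃ C : Circuit K, C.MultDisjoint ∧ C.ComputesEntries F.eval ∧
      C.size ≤ F.size * ((M + 1) ^ k * (2 * M + 3)) + 1 := by
  induction F with
  | input T =>
    refine ⟨Circuit.ofInputs T, Circuit.ofInputs_multDisjoint T,
      Circuit.ofInputs_computesEntries T, ?_⟩
    change T.tsize + 1 ≤ T.tsize * _ + 1
    have := Nat.le_mul_of_pos_right T.tsize (show 0 < (M + 1) ^ k * (2 * M + 3) by positivity)
    omega
  | contr F G ihF ihG =>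
    obtain ⟨hF, hG, hc⟩ := hWF
    simp only [SForm.maxdim, max_le_iff] at hdim
    simp only [SForm.inputMaxOrder, max_le_iff] at hM
    obtain ⟨CL, mdL, hL, szL⟩ := ihF hF hdim.2.1 hM.1
    obtain ⟨CR, mdR, hR, szR⟩ := ihG hG hdim.2.2 hM.2
    obtain ⟨C, md, hC, sz⟩ := Circuit.exists_computesEntries_contr hc hL hR mdL mdR
      fun x hx => (SForm.le_inputMaxOrder hG x hx).trans hM.2
    have hN : (F.eval.contr G.eval).tsize ≤ (M + 1) ^ k :=
      Tens.tsize_le_pow (fun x hx =>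
        (SForm.le_inputMaxOrder (F := .contr F G) ⟨hF, hG, hc⟩ x hx).trans (max_le hM.1 hM.2))
        hdim.1
    have hpow : 1 ≤ (M + 1) ^ k := Nat.one_le_pow _ _ M.succ_pos
    refine ⟨C, md, hC, ?_⟩
    change C.size ≤ (F.size + G.size + 1) * _ + 1
    nlinarith

theorem SForm.exists_circuit_computes {k M : ℕ} {F : SForm K} {f : MvPolynomial ℕ K}
    (hWF : F.WF) (hdim : F.maxdim ≤ k) (hsize : F.size ≤ M) (hf : F.ComputesPoly f) :
    ∃ C : Circuit K, C.MultDisjoint ∧ C.Computes f ∧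
      C.size ≤ M * ((M + 1) ^ k * (2 * M + 3)) + 1 := by
  obtain ⟨hone, hentry⟩ := hf
  obtain ⟨e⟩ := (Tens.tsize_pos_iff _).mp (by omega : 0 < F.eval.tsize)
  rcases SForm.inputsNonempty_or_eval_eq_zero hWF with hne | hzero
  · obtain ⟨C, md, hC, sz⟩ := SForm.exists_circuit_computesEntries hWF hdim
      ((SForm.inputMaxOrder_le_size hne).trans hsize)
    obtain ⟨g, hg⟩ := hC e
    refine ⟨C.withOutput g, md, Circuit.withOutput_computes (hg.trans (hentry e)), sz.trans ?_⟩
    gcongr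
  · refine ⟨Circuit.const 0, Circuit.const_multDisjoint 0, ?_, by simp [Circuit.const]⟩
    rw [← hentry e, hzero e, ← map_zero MvPolynomial.C]
    exact Circuit.const_computes 0

end Formulas

end TC

open TC

/-- families of polynomials computed by polynomial-size
`{*}`-formulas of bounded maximal dimension are in VP. -/
theorem star_formulas_bounded_maxdim_in_VP {K : Type} [Field K] (k : ℕ)
    (F : ℕ → SForm K) (f : ℕ → MvPolynomial ℕ K) (Q : Polynomial ℕ)
    (hWF : ∀ n, (F n).WF) (hsize : ∀ n, (F n).size ≤ Q.eval n)
    (hdim : ∀ n, (F n).maxdim ≤ k) (hcomp : ∀ n, (F n).ComputesPoly (f n)) :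
    VP f := by
  choose C hC using fun n => SForm.exists_circuit_computes (hWF n) (hdim n) (hsize n) (hcomp n)
  refine ⟨C, Q * ((Q + 1) ^ k * (2 * Q + 3)) + 1, fun n => ⟨(hC n).1, (hC n).2.1, ?_⟩⟩
  simpa using (hC n).2.2
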